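/- Assume r ≠ 0 and let γ* ≥ 1 satisfy h₁(h₂(γ*)) + 1 = γ*. Define P* = ((γ*/M)·Σ + I_d)⁻¹ ∈ ℝ^{d×d} and ω* = (h₂(γ*)·R + I_n)⁻¹ r ∈ ℝⁿ. Then there exist real numbers α, β > 0 such that (αP*, βω*) is a stationary point of L, i.e., the Fréchet derivative of L (jointly in (P, ω) ∈ ℝ^{d×d} × ℝⁿ) vanishes at (αP*, βω*). -/

import Mathlib

open Finset Matrix

attribute [local instance] Matrix.normedAddCommGroup Matrix.normedSpace

/-- The closed-form WPGD risk
`L(P, ω) = M − 2·tr(Σ²P)·(ωᵀr) + M·‖ω‖²·tr(ΣPᵀΣP) + (‖ω‖² + ωᵀRω)·tr(Σ²PᵀΣP)`. -/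
noncomputable def Lrisk {d n : ℕ} (Sg : Matrix (Fin d) (Fin d) ℝ)
    (R : Matrix (Fin n) (Fin n) ℝ) (r : Fin n → ℝ) (M : ℝ)
    (P : Matrix (Fin d) (Fin d) ℝ) (w : Fin n → ℝ) : ℝ :=
  M - 2 * Matrix.trace (Sg ^ 2 * P) * (w ⬝ᵥ r)
    + M * (∑ i, w i ^ 2) * Matrix.trace (Sg * Pᵀ * Sg * P)
    + ((∑ i, w i ^ 2) + w ⬝ᵥ (R *ᵥ w)) * Matrix.trace (Sg ^ 2 * Pᵀ * Sg * P)

/-- `h₁(γ̄) = (Σᵢ λᵢ aᵢ²/(1+λᵢγ̄)²) · (Σᵢ aᵢ²/(1+λᵢγ̄)²)⁻¹`. -/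
noncomputable def h1 {n : ℕ} (lam a : Fin n → ℝ) (γ : ℝ) : ℝ :=
  (∑ i, lam i * a i ^ 2 / (1 + lam i * γ) ^ 2) * (∑ i, a i ^ 2 / (1 + lam i * γ) ^ 2)⁻¹

/-- `h₂(γ) = (1 + M·(Σᵢ sᵢ²/(M+sᵢγ)²)·(Σᵢ sᵢ³/(M+sᵢγ)²)⁻¹)⁻¹`. -/
noncomputable def h2 {d : ℕ} (s : Fin d → ℝ) (M γ : ℝ) : ℝ :=
  (1 + M * (∑ i, s i ^ 2 / (M + s i * γ) ^ 2) * (∑ i, s i ^ 3 / (M + s i * γ) ^ 2)⁻¹)⁻¹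

/-!
`Σ` and `P* = ((γ*/M)Σ + I)⁻¹` are simultaneously diagonal in the eigenbasis `U`, and `R` and
`(h₂(γ*)R + I)⁻¹` in the eigenbasis `E`, so every trace and quadratic form involved reduces to a sum
over eigenvalues. For symmetric `Σ` and `R` the derivative of `L` vanishes at `(P, ω)` as soon as
`(ωᵀr) Σ² = M‖ω‖² ΣPᵀΣ + (‖ω‖² + ωᵀRω) Σ²PᵀΣ` and
`tr(Σ²P) r = (M tr(ΣPᵀΣP) + tr(Σ²PᵀΣP)) ω + tr(Σ²PᵀΣP) Rω`.
For `ω = ω*` we have `r = ω + h₂(γ*) Rω`, and `h₁(h₂(γ*)) = ωᵀRω / ‖ω‖²`, so the fixed-point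
equation reads `ωᵀRω = (γ* − 1)‖ω‖²`. On the other side `ΣP*(M + γ*Σ)Σ = MΣ²` and
`h₂(γ*) = tr(Σ²P*ΣP*) / (M tr(ΣP*ΣP*) + tr(Σ²P*ΣP*))`. With these, both equations hold at
`(c P*, ω*)` for `c = (1 + (γ* − 1) h₂(γ*)) / M`.
-/

namespace Matrix

variable {ι : Type*} [Fintype ι]

lemma trace_mul_transpose_mul_mul_comm {X Y : Matrix ι ι ℝ} (hX : Xᵀ = X)
    (hY : Yᵀ = Y) (P Q : Matrix ι ι ℝ) :
    trace (X * Qᵀ * Y * P) = trace (X * Pᵀ * Y * Q) := by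
  rw [← trace_transpose]
  simp only [transpose_mul, transpose_transpose, hX, hY]
  rw [← Matrix.mul_assoc, ← Matrix.mul_assoc, trace_mul_comm]
  simp only [Matrix.mul_assoc]

variable [DecidableEq ι]

noncomputable def conjDiagonal (U : orthogonalGroup ι ℝ) : (ι → ℝ) →ₐ[ℝ] Matrix ι ι ℝ :=
  (Unitary.conjStarAlgAut ℝ _ U).toAlgEquiv.toAlgHom.comp (diagonalAlgHom ℝ)

variable (U : orthogonalGroup ι ℝ)

lemma conjDiagonal_apply (f : ι → ℝ) :
    conjDiagonal U f = (U : Matrix ι ι ℝ) * diagonal f * (U : Matrix ι ι ℝ)ᵀ := by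
  simp [conjDiagonal, star_eq_conjTranspose]

lemma transpose_conjDiagonal (f : ι → ℝ) : (conjDiagonal U f)ᵀ = conjDiagonal U f := by
  simp [conjDiagonal_apply, transpose_mul, Matrix.mul_assoc]

lemma trace_conjDiagonal (f : ι → ℝ) : trace (conjDiagonal U f) = ∑ i, f i := by
  rw [conjDiagonal_apply, trace_mul_cycle, (mem_orthogonalGroup_iff' ..).1 U.2, one_mul,
    trace_diagonal]

lemma conjDiagonal_mul_conjDiagonal_inv {f : ι → ℝ} (hf : ∀ i, f i ≠ 0) :
    conjDiagonal U f * conjDiagonal U f⁻¹ = 1 := by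
  rw [← map_mul, ← map_one (conjDiagonal U)]
  congr 1
  ext i
  simp [hf i]

lemma conjDiagonal_inv {f : ι → ℝ} (hf : ∀ i, f i ≠ 0) :
    (conjDiagonal U f)⁻¹ = conjDiagonal U f⁻¹ :=
  inv_eq_right_inv (conjDiagonal_mul_conjDiagonal_inv U hf)

lemma smul_conjDiagonal_add_one (f : ι → ℝ) (t : ℝ) :
    t • conjDiagonal U f + 1 = conjDiagonal U (t • f + 1) := by
  simp

lemma inv_smul_conjDiagonal_add_one {f : ι → ℝ} {t : ℝ} (h : ∀ i, t * f i + 1 ≠ 0) :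
    (t • conjDiagonal U f + 1)⁻¹ = conjDiagonal U (t • f + 1)⁻¹ := by
  rw [smul_conjDiagonal_add_one, conjDiagonal_inv U (by simpa using h)]

lemma eq_add_smul_conjDiagonal_mulVec {f : ι → ℝ} {t : ℝ} (h : ∀ i, t * f i + 1 ≠ 0)
    {x y : ι → ℝ} (hy : y = (t • conjDiagonal U f + 1)⁻¹ *ᵥ x) :
    x = y + t • (conjDiagonal U f *ᵥ y) := by
  have hunit : (t • conjDiagonal U f + 1) * (t • conjDiagonal U f + 1)⁻¹ = 1 := by
    rw [inv_smul_conjDiagonal_add_one U h, smul_conjDiagonal_add_one,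
      conjDiagonal_mul_conjDiagonal_inv U (by simpa using h)]
  calc x = ((t • conjDiagonal U f + 1) * (t • conjDiagonal U f + 1)⁻¹) *ᵥ x := by
        rw [hunit, one_mulVec]
    _ = y + t • (conjDiagonal U f *ᵥ y) := by
        rw [← mulVec_mulVec, ← hy, add_mulVec, smul_mulVec, one_mulVec, add_comm]

lemma dotProduct_conjDiagonal_mulVec (f x : ι → ℝ) :
    x ⬝ᵥ (conjDiagonal U f *ᵥ x) = ∑ i, f i * ((U : Matrix ι ι ℝ)ᵀ *ᵥ x) i ^ 2 := by
  rw [conjDiagonal_apply, ← mulVec_mulVec, ← mulVec_mulVec, dotProduct_mulVec, ← mulVec_transpose]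
  simp [dotProduct, mulVec_diagonal, sq, mul_left_comm]

lemma conjDiagonal_mulVec_dotProduct (f g x : ι → ℝ) :
    (conjDiagonal U f *ᵥ x) ⬝ᵥ (conjDiagonal U g *ᵥ (conjDiagonal U f *ᵥ x))
      = ∑ i, f i ^ 2 * g i * ((U : Matrix ι ι ℝ)ᵀ *ᵥ x) i ^ 2 := by
  rw [dotProduct_comm, dotProduct_mulVec, ← mulVec_transpose, transpose_conjDiagonal,
    dotProduct_comm, mulVec_mulVec, mulVec_mulVec, ← map_mul, ← map_mul,
    dotProduct_conjDiagonal_mulVec]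
  congr with i
  simp only [Pi.mul_apply]
  ring

end Matrix

section Calculus

variable {E F : Type*} [NormedAddCommGroup E] [NormedSpace ℝ E] [FiniteDimensional ℝ E]
  [NormedAddCommGroup F] [NormedSpace ℝ F]

lemma IsLinearMap.hasFDerivAt {f : E → F} (hf : IsLinearMap ℝ f) (x : E) :
    HasFDerivAt f (IsLinearMap.mk' f hf).toContinuousLinearMap x :=
  (IsLinearMap.mk' f hf).toContinuousLinearMap.hasFDerivAt

lemma IsBilinearMap.hasFDerivAt_diag {b : E → E → F} (hb : IsBilinearMap ℝ b) (x : E) :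
    HasFDerivAt (fun y => b y y)
      (hb.toContinuousBilinearMap x + hb.toContinuousBilinearMap.flip x) x := by
  refine (hb.toContinuousBilinearMap.hasFDerivAt_of_bilinear (hasFDerivAt_id x)
    (hasFDerivAt_id x)).congr_fderiv ?_
  ext h
  simp

end Calculus

section Risk

variable {d n : ℕ}

local notation "𝔼" => Matrix (Fin d) (Fin d) ℝ × (Fin n → ℝ)

lemma isBilinearMap_trace_mul_transpose_mul_mul (X Y : Matrix (Fin d) (Fin d) ℝ) :
    IsBilinearMap ℝ (fun z z' : 𝔼 => trace (X * z.1ᵀ * Y * z'.1)) where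
  add_left _ _ _ := by simp [Matrix.mul_add, Matrix.add_mul, trace_add]
  smul_left _ _ _ := by simp
  add_right _ _ _ := by simp [Matrix.mul_add, trace_add]
  smul_right _ _ _ := by simp

lemma isBilinearMap_dotProduct_mulVec (R : Matrix (Fin n) (Fin n) ℝ) :
    IsBilinearMap ℝ (fun z z' : 𝔼 => z.2 ⬝ᵥ (R *ᵥ z'.2)) where
  add_left _ _ _ := by simp [add_dotProduct]
  smul_left _ _ _ := by simp
  add_right _ _ _ := by simp [mulVec_add]
  smul_right _ _ _ := by simp [mulVec_smul]

lemma isLinearMap_trace_mul (X : Matrix (Fin d) (Fin d) ℝ) :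
    IsLinearMap ℝ (fun z : 𝔼 => trace (X * z.1)) where
  map_add _ _ := by simp [Matrix.mul_add]
  map_smul _ _ := by simp

lemma isLinearMap_dotProduct (r : Fin n → ℝ) :
    IsLinearMap ℝ (fun z : 𝔼 => z.2 ⬝ᵥ r) where
  map_add _ _ := by simp [add_dotProduct]
  map_smul _ _ := by simp

lemma hasFDerivAt_Lrisk_eq_zero {Sg : Matrix (Fin d) (Fin d) ℝ} {R : Matrix (Fin n) (Fin n) ℝ}
    {r : Fin n → ℝ} {M : ℝ} (hSg : Sgᵀ = Sg) (hR : Rᵀ = R) {P : Matrix (Fin d) (Fin d) ℝ}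
    {w : Fin n → ℝ}
    (hgradP : (w ⬝ᵥ r) • Sg ^ 2 = (M * (w ⬝ᵥ w)) • (Sg * Pᵀ * Sg)
      + (w ⬝ᵥ w + w ⬝ᵥ (R *ᵥ w)) • (Sg ^ 2 * Pᵀ * Sg))
    (hgradw : trace (Sg ^ 2 * P) • r
      = (M * trace (Sg * Pᵀ * Sg * P) + trace (Sg ^ 2 * Pᵀ * Sg * P)) • w
        + trace (Sg ^ 2 * Pᵀ * Sg * P) • (R *ᵥ w)) :
    HasFDerivAt (fun z : 𝔼 => Lrisk Sg R r M z.1 z.2) (0 : 𝔼 →L[ℝ] ℝ) (P, w) := by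
  have hA := (isLinearMap_trace_mul (n := n) (Sg ^ 2)).hasFDerivAt (P, w)
  have hB := (isLinearMap_dotProduct (d := d) r).hasFDerivAt (P, w)
  have hN := (isBilinearMap_dotProduct_mulVec (d := d) 1).hasFDerivAt_diag (P, w)
  have hQ := (isBilinearMap_dotProduct_mulVec (d := d) R).hasFDerivAt_diag (P, w)
  have hS := (isBilinearMap_trace_mul_transpose_mul_mul (n := n) Sg Sg).hasFDerivAt_diag (P, w)
  have hT := (isBilinearMap_trace_mul_transpose_mul_mul (n := n) (Sg ^ 2) Sg).hasFDerivAt_diag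
    (P, w)
  have hL := ((((hA.const_mul 2).mul hB).const_sub M).add
    ((hN.const_mul M).mul hS)).add ((hN.add hQ).mul hT)
  refine (hL.congr_fderiv ?_).congr_of_eventuallyEq (.of_forall fun z => ?_)
  · refine ContinuousLinearMap.ext fun z => ?_
    obtain ⟨Z, v⟩ := z
    have hPZ := congrArg (fun A => trace (A * Z)) hgradP
    have hwv := congrArg (· ⬝ᵥ v) hgradw
    simp only [Matrix.add_mul, Matrix.smul_mul, trace_add, trace_smul, add_dotProduct,
      smul_dotProduct, smul_eq_mul] at hPZ hwv
    have hSg2 : (Sg ^ 2)ᵀ = Sg ^ 2 := by rw [transpose_pow, hSg]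
    have hRv : w ⬝ᵥ (R *ᵥ v) = v ⬝ᵥ (R *ᵥ w) := by
      rw [dotProduct_mulVec, ← mulVec_transpose, hR, dotProduct_comm]
    show _ = (0 : ℝ)
    simp only [_root_.add_apply, _root_.neg_apply, _root_.smul_apply,
      LinearMap.coe_toContinuousLinearMap', IsLinearMap.mk'_apply,
      IsBilinearMap.toContinuousBilinearMap_apply, ContinuousLinearMap.flip_apply, smul_eq_mul,
      Pi.add_apply, one_mulVec]
    -- symmetry of `Σ` and `R` makes the two halves of each quadratic form's derivative equal
    rw [trace_mul_transpose_mul_mul_comm hSg hSg P Z,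
      trace_mul_transpose_mul_mul_comm hSg2 hSg P Z, hRv, dotProduct_comm v w, dotProduct_comm v r,
      dotProduct_comm v (R *ᵥ w)]
    linear_combination (-2) * hPZ - 2 * hwv
  · simp [Lrisk, dotProduct, sq]

lemma hasFDerivAt_Lrisk_smul_eq_zero {Sg : Matrix (Fin d) (Fin d) ℝ}
    {R : Matrix (Fin n) (Fin n) ℝ} {r : Fin n → ℝ} {M : ℝ} (hSg : Sgᵀ = Sg) (hR : Rᵀ = R)
    (hM : M ≠ 0) {P : Matrix (Fin d) (Fin d) ℝ} (hP : Pᵀ = P) {w : Fin n → ℝ} {γ H c : ℝ}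
    (hPSg : M • (Sg * P * Sg) + γ • (Sg ^ 2 * P * Sg) = M • Sg ^ 2)
    (hH : H * (M * trace (Sg * P * Sg * P) + trace (Sg ^ 2 * P * Sg * P))
      = trace (Sg ^ 2 * P * Sg * P))
    (hr : r = w + H • (R *ᵥ w)) (hfix : w ⬝ᵥ (R *ᵥ w) = (γ - 1) * (w ⬝ᵥ w))
    (hc : M * c = 1 + (γ - 1) * H) :
    HasFDerivAt (fun z : 𝔼 => Lrisk Sg R r M z.1 z.2) (0 : 𝔼 →L[ℝ] ℝ) (c • P, w) := by
  have hwr : w ⬝ᵥ r = w ⬝ᵥ w + H * w ⬝ᵥ (R *ᵥ w) := by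
    rw [hr, dotProduct_add, dotProduct_smul, smul_eq_mul]
  have htr : M * trace (Sg * P * Sg * P) + γ * trace (Sg ^ 2 * P * Sg * P)
      = M * trace (Sg ^ 2 * P) := by
    simpa only [Matrix.add_mul, Matrix.smul_mul, trace_add, trace_smul, smul_eq_mul]
      using congrArg (fun X => trace (X * P)) hPSg
  have hcP : c * (M * trace (Sg * P * Sg * P) + trace (Sg ^ 2 * P * Sg * P))
      = trace (Sg ^ 2 * P) := by
    refine mul_left_cancel₀ hM ?_
    linear_combination (M * trace (Sg * P * Sg * P) + trace (Sg ^ 2 * P * Sg * P)) * hc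
      + (γ - 1) * hH + htr
  refine hasFDerivAt_Lrisk_eq_zero hSg hR ?_ ?_ <;>
    simp only [transpose_smul, hP, Matrix.mul_smul, Matrix.smul_mul, trace_smul, smul_eq_mul]
  · rw [hwr, hfix]
    linear_combination (norm := module) -(w ⬝ᵥ w * c) • hPSg - (w ⬝ᵥ w * hc) • Sg ^ 2
  · rw [hr]
    linear_combination (norm := module) (-c * hcP) • w + (c ^ 2 * hH - c * H * hcP) • (R *ᵥ w)

lemma h2_nonneg {s : Fin d → ℝ} (hs : ∀ i, 0 ≤ s i) {M : ℝ} (hM : 0 ≤ M) (γ : ℝ) :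
    0 ≤ h2 s M γ := by
  unfold h2
  have hB : 0 ≤ ∑ i, s i ^ 3 / (M + s i * γ) ^ 2 :=
    sum_nonneg fun i _ => div_nonneg (pow_nonneg (hs i) 3) (sq_nonneg _)
  positivity

lemma h2_mul_trace_eq (U : orthogonalGroup (Fin d) ℝ) [Nonempty (Fin d)] {s : Fin d → ℝ}
    (hs : ∀ i, 0 < s i) {M γ : ℝ} (hM : 0 < M) (hden : ∀ i, M + s i * γ ≠ 0)
    {Sg P : Matrix (Fin d) (Fin d) ℝ} (hSg : Sg = conjDiagonal U s)
    (hP : P = conjDiagonal U ((γ / M) • s + 1)⁻¹) :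
    h2 s M γ * (M * trace (Sg * P * Sg * P) + trace (Sg ^ 2 * P * Sg * P))
      = trace (Sg ^ 2 * P * Sg * P) := by
  have hp i : ((γ / M) • s + 1)⁻¹ i = M / (M + s i * γ) := by
    simp only [Pi.inv_apply, Pi.add_apply, Pi.smul_apply, smul_eq_mul, Pi.one_apply]
    field_simp
    ring
  have hA : ∑ i, s i * (M / (M + s i * γ)) * s i * (M / (M + s i * γ))
      = M ^ 2 * ∑ i, s i ^ 2 / (M + s i * γ) ^ 2 := by
    rw [mul_sum]
    exact sum_congr rfl fun i _ => by field_simp [hden i]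
  have hB : ∑ i, s i ^ 2 * (M / (M + s i * γ)) * s i * (M / (M + s i * γ))
      = M ^ 2 * ∑ i, s i ^ 3 / (M + s i * γ) ^ 2 := by
    rw [mul_sum]
    exact sum_congr rfl fun i _ => by field_simp [hden i]
  have hA0 : 0 ≤ ∑ i, s i ^ 2 / (M + s i * γ) ^ 2 := by positivity
  have hB0 : 0 < ∑ i, s i ^ 3 / (M + s i * γ) ^ 2 :=
    sum_pos (fun i _ => div_pos (pow_pos (hs i) 3) (sq_pos_of_ne_zero (hden i))) univ_nonempty
  subst hSg hP
  simp only [← map_pow, ← map_mul, trace_conjDiagonal, Pi.mul_apply, Pi.pow_apply, hp]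
  rw [h2, hA, hB]
  generalize ∑ i, s i ^ 2 / (M + s i * γ) ^ 2 = A at hA0 ⊢
  generalize ∑ i, s i ^ 3 / (M + s i * γ) ^ 2 = B at hB0 ⊢
  have : M * A + B ≠ 0 := by positivity
  field_simp
  ring

lemma h1_eq_div (E : orthogonalGroup (Fin n) ℝ) {lam : Fin n → ℝ} {H : ℝ}
    (h : ∀ i, H * lam i + 1 ≠ 0) {r ω : Fin n → ℝ}
    (hω : ω = (H • conjDiagonal E lam + 1)⁻¹ *ᵥ r) :
    h1 lam ((E : Matrix (Fin n) (Fin n) ℝ)ᵀ *ᵥ r) H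
      = ω ⬝ᵥ (conjDiagonal E lam *ᵥ ω) / (ω ⬝ᵥ ω) := by
  rw [inv_smul_conjDiagonal_add_one E h] at hω
  have hωω : ω ⬝ᵥ ω
      = ∑ i, ((H • lam + 1)⁻¹ i) ^ 2 * ((E : Matrix (Fin n) (Fin n) ℝ)ᵀ *ᵥ r) i ^ 2 := by
    simpa [hω] using conjDiagonal_mulVec_dotProduct E (H • lam + 1)⁻¹ 1 r
  rw [hωω, hω, conjDiagonal_mulVec_dotProduct, h1, div_eq_mul_inv]
  congr 1
  · refine sum_congr rfl fun i _ => ?_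
    simp only [Pi.inv_apply, Pi.add_apply, Pi.smul_apply, smul_eq_mul, Pi.one_apply, inv_pow]
    ring
  · congr 1
    refine sum_congr rfl fun i _ => ?_
    simp only [Pi.inv_apply, Pi.add_apply, Pi.smul_apply, smul_eq_mul, Pi.one_apply, inv_pow]
    ring

lemma conjDiagonal_resolvent_identity (U : orthogonalGroup (Fin d) ℝ) {s : Fin d → ℝ} {M γ : ℝ}
    (hM : M ≠ 0) (hden : ∀ i, M + s i * γ ≠ 0) :
    M • (conjDiagonal U s * conjDiagonal U ((γ / M) • s + 1)⁻¹ * conjDiagonal U s)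
      + γ • (conjDiagonal U s ^ 2 * conjDiagonal U ((γ / M) • s + 1)⁻¹ * conjDiagonal U s)
      = M • conjDiagonal U s ^ 2 := by
  simp only [← map_pow, ← map_mul, ← map_smul, ← map_add]
  congr 1
  ext i
  simp only [Pi.add_apply, Pi.smul_apply, Pi.mul_apply, Pi.pow_apply, Pi.inv_apply, Pi.one_apply,
    smul_eq_mul]
  have := hden i
  rw [add_comm] at this
  field_simp
  ring

lemma hasFDerivAt_Lrisk_resolvent (U : orthogonalGroup (Fin d) ℝ) [Nonempty (Fin d)]
    {s : Fin d → ℝ} (hs : ∀ i, 0 < s i) {M γ : ℝ} (hM : 0 < M) (hγ : 0 ≤ γ)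
    {Sg : Matrix (Fin d) (Fin d) ℝ} (hSg : Sg = conjDiagonal U s) {R : Matrix (Fin n) (Fin n) ℝ}
    (hR : Rᵀ = R) {r w : Fin n → ℝ} (hr : r = w + h2 s M γ • (R *ᵥ w))
    (hfix : w ⬝ᵥ (R *ᵥ w) = (γ - 1) * (w ⬝ᵥ w)) :
    HasFDerivAt (fun z : 𝔼 => Lrisk Sg R r M z.1 z.2) (0 : 𝔼 →L[ℝ] ℝ)
      (((1 + (γ - 1) * h2 s M γ) / M) • ((γ / M) • Sg + 1)⁻¹, w) := by
  have hden i : M + s i * γ ≠ 0 := by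
    have := hs i
    positivity
  have hP : ((γ / M) • Sg + 1)⁻¹ = conjDiagonal U ((γ / M) • s + 1)⁻¹ := by
    rw [hSg, inv_smul_conjDiagonal_add_one]
    intro i
    have := hs i
    positivity
  rw [hP]
  refine hasFDerivAt_Lrisk_smul_eq_zero (hSg ▸ transpose_conjDiagonal U s) hR hM.ne'
    (transpose_conjDiagonal U _) ?_ (h2_mul_trace_eq U hs hM hden hSg rfl) hr hfix
    (mul_div_cancel₀ _ hM.ne')
  rw [hSg]
  exact conjDiagonal_resolvent_identity U hM.ne' hden

end Risk

theorem stmt14_general (d n : ℕ) (hd : 0 < d) (σ : ℝ)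
    (Sg : Matrix (Fin d) (Fin d) ℝ)
    (R : Matrix (Fin n) (Fin n) ℝ) (hRsym : R.IsSymm)
    (r : Fin n → ℝ) (hr : r ≠ 0)
    (M : ℝ) (hM : M = σ ^ 2 + Matrix.trace Sg)
    -- eigendecompositions `Σ = U diag(s) Uᵀ` and `R = E diag(λ) Eᵀ`
    (s : Fin d → ℝ) (hs : ∀ i, 0 < s i)
    (U : Matrix (Fin d) (Fin d) ℝ) (hU : Uᵀ * U = 1)
    (hSgd : Sg = U * Matrix.diagonal s * Uᵀ)
    (lam : Fin n → ℝ) (hlam : ∀ i, 0 ≤ lam i)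
    (E : Matrix (Fin n) (Fin n) ℝ) (hE : Eᵀ * E = 1)
    (hRd : R = E * Matrix.diagonal lam * Eᵀ)
    (a : Fin n → ℝ) (ha : a = Eᵀ *ᵥ r)
    -- the fixed point
    (γstar : ℝ) (hγ1 : 1 ≤ γstar)
    (hγfix : h1 lam a (h2 s M γstar) + 1 = γstar)
    (Pstar : Matrix (Fin d) (Fin d) ℝ)
    (hPstar : Pstar = ((γstar / M) • Sg + 1)⁻¹)
    (ωstar : Fin n → ℝ)
    (hωstar : ωstar = (h2 s M γstar • R + 1)⁻¹ *ᵥ r) :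
    ∃ c1 c2 : ℝ, 0 < c1 ∧ 0 < c2 ∧
      HasFDerivAt
        (fun pw : Matrix (Fin d) (Fin d) ℝ × (Fin n → ℝ) => Lrisk Sg R r M pw.1 pw.2)
        (0 : (Matrix (Fin d) (Fin d) ℝ × (Fin n → ℝ)) →L[ℝ] ℝ)
        (c1 • Pstar, c2 • ωstar) := by
  let U' : orthogonalGroup (Fin d) ℝ := ⟨U, (mem_orthogonalGroup_iff' ..).2 hU⟩
  let E' : orthogonalGroup (Fin n) ℝ := ⟨E, (mem_orthogonalGroup_iff' ..).2 hE⟩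
  have hSg : Sg = conjDiagonal U' s := hSgd.trans (conjDiagonal_apply U' s).symm
  have hR : R = conjDiagonal E' lam := hRd.trans (conjDiagonal_apply E' lam).symm
  have : Nonempty (Fin d) := ⟨⟨0, hd⟩⟩
  have hM0 : 0 < M := by
    have := sum_pos (fun i _ => hs i) univ_nonempty
    rw [hM, hSg, trace_conjDiagonal]
    positivity
  set H := h2 s M γstar
  have hH0 : 0 ≤ H := h2_nonneg (fun i => (hs i).le) hM0.le γstar
  have hHlam i : H * lam i + 1 ≠ 0 := by
    have := hlam i
    positivity
  rw [hR] at hωstar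
  have hrω : r = ωstar + H • (R *ᵥ ωstar) := hR ▸ eq_add_smul_conjDiagonal_mulVec E' hHlam hωstar
  have hω0 : ωstar ⬝ᵥ ωstar ≠ 0 := by
    rw [Ne, dotProduct_self_eq_zero]
    rintro rfl
    simp [hrω] at hr
  have hfix : ωstar ⬝ᵥ (R *ᵥ ωstar) = (γstar - 1) * (ωstar ⬝ᵥ ωstar) := by
    rw [← hγfix, ha, add_sub_cancel_right, h1_eq_div E' hHlam hωstar, hR, div_mul_cancel₀ _ hω0]
  refine ⟨(1 + (γstar - 1) * H) / M, 1, ?_, one_pos, ?_⟩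
  · have := mul_nonneg (sub_nonneg.2 hγ1) hH0
    exact div_pos (by linarith) hM0
  rw [one_smul, hPstar]
  exact hasFDerivAt_Lrisk_resolvent U' hs hM0 (by linarith) hSg hRsym hrω hfix

/-- Stationary point of the WPGD risk. If `γ* ≥ 1` is a fixed
point of `γ ↦ h₁(h₂(γ)) + 1`, then with `P* = ((γ*/M)Σ + I)⁻¹` and
`ω* = (h₂(γ*)R + I)⁻¹r`, some positive rescaling `(αP*, βω*)` is a stationary
point of `L`. -/
theorem stmt14 (d n : ℕ) (hd : 0 < d) (hn : 0 < n) (σ : ℝ) (hσ : 0 ≤ σ)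
    (Sg : Matrix (Fin d) (Fin d) ℝ) (hSgsym : Sg.IsSymm) (hSgpd : Sg.PosDef)
    (R : Matrix (Fin n) (Fin n) ℝ) (hRsym : R.IsSymm) (hRpsd : R.PosSemidef)
    (r : Fin n → ℝ) (hr : r ≠ 0)
    (M : ℝ) (hM : M = σ ^ 2 + Matrix.trace Sg)
    -- eigendecompositions `Σ = U diag(s) Uᵀ` and `R = E diag(λ) Eᵀ`
    (s : Fin d → ℝ) (hs : ∀ i, 0 < s i)
    (U : Matrix (Fin d) (Fin d) ℝ) (hU : Uᵀ * U = 1)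
    (hSgd : Sg = U * Matrix.diagonal s * Uᵀ)
    (lam : Fin n → ℝ) (hlam : ∀ i, 0 ≤ lam i)
    (E : Matrix (Fin n) (Fin n) ℝ) (hE : Eᵀ * E = 1)
    (hRd : R = E * Matrix.diagonal lam * Eᵀ)
    (a : Fin n → ℝ) (ha : a = Eᵀ *ᵥ r)
    -- the fixed point
    (γstar : ℝ) (hγ1 : 1 ≤ γstar)
    (hγfix : h1 lam a (h2 s M γstar) + 1 = γstar)
    (Pstar : Matrix (Fin d) (Fin d) ℝ)
    (hPstar : Pstar = ((γstar / M) • Sg + 1)⁻¹)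
    (ωstar : Fin n → ℝ)
    (hωstar : ωstar = (h2 s M γstar • R + 1)⁻¹ *ᵥ r) :
    ∃ c1 c2 : ℝ, 0 < c1 ∧ 0 < c2 ∧
      HasFDerivAt
        (fun pw : Matrix (Fin d) (Fin d) ℝ × (Fin n → ℝ) => Lrisk Sg R r M pw.1 pw.2)
        (0 : (Matrix (Fin d) (Fin d) ℝ × (Fin n → ℝ)) →L[ℝ] ℝ)
        (c1 • Pstar, c2 • ωstar) :=
  stmt14_general d n hd σ Sg R hRsym r hr M hM s hs U hU hSgd lam hlam E hE hRd a ha γstar hγ1 hγfix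
    Pstar hPstar ωstar hωstar
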